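/- For v ∈ ℍ define σ(v) : ℍ → ℍ by σ(v)(x) = v x v*. Then: (i) if x is a paravector then σ(v)(x) is a paravector; (ii) σ(v)(k) = |v|² k; (iii) if v = r·exp(uθ) with r, θ real and u a unit imaginary quaternion, then σ(v)(−uk) = |v|² (−uk). (Thus σ(v) preserves the splitting ℍ = $ℝ³ ⊕ ℝk, acting on ℝk by multiplication by |v|², and on $ℝ³ fixing the axis −uk up to the factor |v|².) -/

import Mathlib

open Quaternion

noncomputable section

/-- The involution `q* = a + bi + cj - dk` on quaternions (Clifford reversion). -/
def qstar (q : ℍ[ℝ]) : ℍ[ℝ] := ⟨q.re, q.imI, q.imJ, -q.imK⟩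

/-- The involution `q' = a - bi - cj + dk` on quaternions. -/
def qprime (q : ℍ[ℝ]) : ℍ[ℝ] := ⟨q.re, -q.imI, -q.imJ, q.imK⟩

/-- A paravector is an element of `ℝ + ℝi + ℝj`, i.e. a quaternion with zero `k`-component. -/
def IsParavector (q : ℍ[ℝ]) : Prop := q.imK = 0

/-- The quaternion `k`. -/
def qk : ℍ[ℝ] := ⟨0, 0, 0, 1⟩

/-- A quaternionic spinor: a pair `(ξ, η) ≠ (0,0)` with `ξ * conj η` a paravector. -/
def IsSpinor (κ : ℍ[ℝ] × ℍ[ℝ]) : Prop := κ ≠ 0 ∧ IsParavector (κ.1 * star κ.2)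

/-- The bracket `{κ₁, κ₂} = ξ₁* η₂ − η₁* ξ₂`. -/
def bracket (κ₁ κ₂ : ℍ[ℝ] × ℍ[ℝ]) : ℍ[ℝ] := qstar κ₁.1 * κ₂.2 - qstar κ₁.2 * κ₂.1

/-- Right multiplication `κ x = (ξ x, η x)`. -/
def rmul (κ : ℍ[ℝ] × ℍ[ℝ]) (x : ℍ[ℝ]) : ℍ[ℝ] × ℍ[ℝ] := (κ.1 * x, κ.2 * x)

/-- The complementary pair `κ̌ = (η', −ξ')`. -/
def qcheck (κ : ℍ[ℝ] × ℍ[ℝ]) : ℍ[ℝ] × ℍ[ℝ] := (qprime κ.2, -qprime κ.1)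

/-- The real inner product on `ℍ²`: `⟨κ₁, κ₂⟩ = Re (ξ₁ ξ̄₂ + η₁ η̄₂)`. -/
def qinner (κ₁ κ₂ : ℍ[ℝ] × ℍ[ℝ]) : ℝ := (κ₁.1 * star κ₂.1 + κ₁.2 * star κ₂.2).re

/-- The squared norm `|κ|² = |ξ|² + |η|²` on `ℍ²`. -/
def qnsq (κ : ℍ[ℝ] × ℍ[ℝ]) : ℝ := Quaternion.normSq κ.1 + Quaternion.normSq κ.2

/-- The quaternionic exponential `exp (u θ) = cos θ + (sin θ) u` for `u` unit imaginary. -/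
def qexp (u : ℍ[ℝ]) (θ : ℝ) : ℍ[ℝ] := ((Real.cos θ : ℝ) : ℍ[ℝ]) + Real.sin θ • u

/-- The map `σ(v)(x) = v x v*`. -/
def qsigma (v x : ℍ[ℝ]) : ℍ[ℝ] := v * x * qstar v

/-!
The reversion `q ↦ q*` is the anti-automorphism `q ↦ k q̄ k⁻¹`, and the paravectors are exactly
its fixed points; hence `σ(v)` preserves paravectors. Moreover `k v* = v̄ k`, so
`σ(v)(x k) = (v x v̄) k`, which equals `|v|² x k` whenever `v` commutes with `x`. This gives (ii)
with `x = 1`, and (iii) with `x = -u`, since `r exp(uθ) ∈ ℝ + ℝu` commutes with `u`.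
-/

@[simp] lemma qstar_re (q : ℍ[ℝ]) : (qstar q).re = q.re := rfl
@[simp] lemma qstar_imI (q : ℍ[ℝ]) : (qstar q).imI = q.imI := rfl
@[simp] lemma qstar_imJ (q : ℍ[ℝ]) : (qstar q).imJ = q.imJ := rfl
@[simp] lemma qstar_imK (q : ℍ[ℝ]) : (qstar q).imK = -q.imK := rfl
@[simp] lemma qk_re : qk.re = 0 := rfl
@[simp] lemma qk_imI : qk.imI = 0 := rfl
@[simp] lemma qk_imJ : qk.imJ = 0 := rfl
@[simp] lemma qk_imK : qk.imK = 1 := rfl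

@[simp] lemma qstar_qstar (q : ℍ[ℝ]) : qstar (qstar q) = q := by
  ext <;> simp

lemma qstar_mul (p q : ℍ[ℝ]) : qstar (p * q) = qstar q * qstar p := by
  ext <;> simp <;> ring

lemma isParavector_iff_qstar_eq (q : ℍ[ℝ]) : IsParavector q ↔ qstar q = q := by
  rw [IsParavector, Quaternion.ext_iff]
  simp [CharZero.neg_eq_self_iff]

lemma isParavector_qsigma (v : ℍ[ℝ]) {x : ℍ[ℝ]} (hx : IsParavector x) :
    IsParavector (qsigma v x) := by
  rw [isParavector_iff_qstar_eq] at hx ⊢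
  rw [qsigma, qstar_mul, qstar_mul, qstar_qstar, hx, mul_assoc]

lemma qk_mul_qstar (q : ℍ[ℝ]) : qk * qstar q = star q * qk := by
  ext <;> simp

lemma qsigma_mul_qk (v x : ℍ[ℝ]) : qsigma v (x * qk) = v * x * star v * qk := by
  rw [qsigma, ← mul_assoc v x, mul_assoc (v * x), qk_mul_qstar, ← mul_assoc]

lemma qsigma_mul_qk_of_commute {v x : ℍ[ℝ]} (h : Commute v x) :
    qsigma v (x * qk) = normSq v • (x * qk) := by
  rw [qsigma_mul_qk, h.eq, mul_assoc x, self_mul_star, mul_coe_eq_smul, smul_mul_assoc]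

lemma commute_smul_qexp (r θ : ℝ) (u : ℍ[ℝ]) : Commute (r • qexp u θ) u :=
  ((coe_commute _ u).add_left ((Commute.refl u).smul_left _)).smul_left r

/-- Properties of `σ(v)(x) = v x v*`:
(i) it preserves paravectors; (ii) `σ(v)(k) = |v|² k`;
(iii) if `v = r exp(uθ)` with `u` unit imaginary then `σ(v)(−uk) = |v|² (−uk)`. -/
theorem sigma_properties (v : ℍ[ℝ]) :
    (∀ x : ℍ[ℝ], IsParavector x → IsParavector (qsigma v x)) ∧
    (qsigma v qk = Quaternion.normSq v • qk) ∧
    (∀ (r θ : ℝ) (u : ℍ[ℝ]), u.re = 0 → Quaternion.normSq u = 1 → v = r • qexp u θ →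
      qsigma v (-(u * qk)) = Quaternion.normSq v • (-(u * qk))) := by
  refine ⟨fun x hx => isParavector_qsigma v hx, ?_, ?_⟩
  · simpa using qsigma_mul_qk_of_commute (Commute.one_right v)
  · rintro r θ u - - rfl
    simpa using qsigma_mul_qk_of_commute (commute_smul_qexp r θ u).neg_right
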